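/- arXiv:1505.04304 — 2 statements merged into one kernel-verified Lean document; each statement's English description precedes it below -/
import Mathlib

section
/- Let N be a large subalgebra of the pseudo MV-algebra M = Γ(G,u), and suppose both N and M are strongly projectable. Then for every polar ideal I of M there is a unique Boolean element a ∈ N ∩ I such that I = ↓_M a. -/
variable {G : Type*} [Lattice G] [AddGroup G]
  [CovariantClass G G (· + ·) (· ≤ ·)]
  [CovariantClass G G (Function.swap (· + ·)) (· ≤ ·)]

/-- `u` is a strong unit of the lattice-ordered group `G`. -/
def IsStrongUnit (u : G) : Prop := 0 ≤ u ∧ ∀ x : G, ∃ n : ℕ, x ≤ n • u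

/-- The operation `x ⊕ y := (x + y) ⊓ u` of the pseudo MV-algebra `Γ(G,u)`. -/
def oplus (u x y : G) : G := (x + y) ⊓ u

/-- The operation `x ⊙ y := (x - u + y) ⊔ 0` of the pseudo MV-algebra `Γ(G,u)`. -/
def odot (u x y : G) : G := (x - u + y) ⊔ 0

/-- `n.x := x ⊕ ⋯ ⊕ x` (`n` summands), with `0.x = 0`. -/
def nOplus (u : G) : ℕ → G → G
  | 0, _ => 0
  | n + 1, x => oplus u (nOplus u n x) x

/-- `I` is an ideal of the pseudo MV-algebra with carrier `C ⊆ Γ(G,u)`: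
a nonempty subset of `C`, downward closed within `C`, and closed under `⊕`. -/
def IsIdealIn (u : G) (C I : Set G) : Prop :=
  I ⊆ C ∧ I.Nonempty ∧ (∀ x ∈ I, ∀ y ∈ C, y ≤ x → y ∈ I) ∧
    ∀ x ∈ I, ∀ y ∈ I, oplus u x y ∈ I

/-- `I` is a normal ideal: `x ⊕ I = I ⊕ x` for all `x ∈ C`. -/
def IsNormalIdealIn (u : G) (C I : Set G) : Prop :=
  IsIdealIn u C I ∧ ∀ x ∈ C, (fun i => oplus u x i) '' I = (fun i => oplus u i x) '' I

/-- `⟨X⟩_n`, the smallest normal ideal (of the carrier `C`) containing `X`. -/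
def normalGenIn (u : G) (C X : Set G) : Set G :=
  ⋂₀ {I | IsNormalIdealIn u C I ∧ X ⊆ I}

/-- The polar `X^⊥ = {y ∈ C : y ∧ x = 0 for all x ∈ X}` computed in carrier `C`. -/
def polarIn (C X : Set G) : Set G := {y ∈ C | ∀ x ∈ X, y ⊓ x = 0}

/-- `A ⊕ B := {a ⊕ b : a ∈ A, b ∈ B}`. -/
def setOplus (u : G) (A B : Set G) : Set G := Set.image2 (oplus u) A B

/-- `↓a` computed within the carrier `C`. -/
def dsetIn (C : Set G) (a : G) : Set G := {x ∈ C | x ≤ a}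

/-- `I` is a summand-ideal of the carrier `C`: a normal ideal such that for
some normal ideal `J`, `I ∩ J = {0}` and `⟨I ∪ J⟩_n = C`. -/
def IsSummandIdealIn (u : G) (C I : Set G) : Prop :=
  IsNormalIdealIn u C I ∧ ∃ J, IsNormalIdealIn u C J ∧ I ∩ J = {0} ∧
    normalGenIn u C (I ∪ J) = C

/-- `I` is a polar ideal of the carrier `C`: `I = I^⊥⊥`. -/
def IsPolarIdealIn (C I : Set G) : Prop := polarIn C (polarIn C I) = I

/-- `a` is a Boolean element of the carrier `C`: `a ∈ C` and `a ⊕ a = a`. -/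
def IsBooleanIn (u : G) (C : Set G) (a : G) : Prop := a ∈ C ∧ oplus u a a = a

/-- The carrier `C` is strongly projectable: every polar ideal is a summand-ideal. -/
def IsStronglyProjectableIn (u : G) (C : Set G) : Prop :=
  ∀ I : Set G, IsPolarIdealIn C I → IsSummandIdealIn u C I

/-- `N` is a subalgebra of `Γ(G,u)`: contains `0` and `u`, closed under `⊕`,
`x⁻ = u - x` and `x∼ = -x + u`. -/
def IsSubalg (u : G) (N : Set G) : Prop :=
  N ⊆ Set.Icc 0 u ∧ 0 ∈ N ∧ u ∈ N ∧
    (∀ x ∈ N, ∀ y ∈ N, oplus u x y ∈ N) ∧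
    (∀ x ∈ N, u - x ∈ N) ∧ (∀ x ∈ N, -x + u ∈ N)

/-- `N` is a large subalgebra of `Γ(G,u)`: for every nonzero `y ∈ Γ(G,u)` there
are `n ∈ ℕ` and a nonzero `x ∈ N` with `x ≤ n.y`. -/
def IsLargeSubalg (u : G) (N : Set G) : Prop :=
  IsSubalg u N ∧ ∀ y ∈ Set.Icc (0 : G) u, y ≠ 0 →
    ∃ n : ℕ, ∃ x ∈ N, x ≠ 0 ∧ x ≤ nOplus u n y

/-!
Strong projectability makes the polar ideal `I` a summand-ideal: `I ∩ J = {0}` and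
`⟨I ∪ J⟩ = M`. Elements of `I` and `J` are disjoint, hence commute, so `I ⊕ J` is a normal ideal
(downward closed by Riesz decomposition) and contains `u`: `u = i₀ ⊕ j₀`. Every `x ∈ I` satisfies
`x ≤ i₀ + j₀` and `x ⊓ j₀ = 0`, so `x ≤ i₀`; thus `i₀` is the greatest element of `I`, and
`i₀ ⊓ (-i₀ + u) = 0`. In the same way the polar `K = (I ∩ N)^⊥⊥` of `N` has a greatest element
`b` disjoint from `-b + u`. Largeness of `N` transfers orthogonality from `N` to `M`: it gives
`K ⊆ I`, hence `b ≤ i₀`, and `i₀ ⊓ (-b + u) = 0`, hence `i₀ ≤ b`.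
-/

section LatticeOrderedGroup

variable {α : Type*} [Lattice α] [AddGroup α] {u : α} {C I J N X Y : Set α}

theorem oplus_le_add {x y : α} : oplus u x y ≤ x + y := inf_le_left

theorem oplus_zero_right {x : α} (hx : x ≤ u) : oplus u x 0 = x := by
  rw [oplus, add_zero, inf_eq_left.mpr hx]

theorem oplus_zero_left {x : α} (hx : x ≤ u) : oplus u 0 x = x := by
  rw [oplus, zero_add, inf_eq_left.mpr hx]

theorem isNormalIdealIn_iff :
    IsNormalIdealIn u C I ↔ IsIdealIn u C I ∧ ∀ x ∈ C, setOplus u {x} I = setOplus u I {x} := by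
  simp only [IsNormalIdealIn, setOplus, Set.image2_singleton_left, Set.image2_singleton_right]

theorem IsSubalg.unit_nonneg (hC : IsSubalg u C) : 0 ≤ u := (hC.1 hC.2.2.1).1

theorem IsSubalg.nonneg (hC : IsSubalg u C) {x : α} (hx : x ∈ C) : 0 ≤ x :=
  (hC.1 hx).1

theorem IsIdealIn.zero_mem (hI : IsIdealIn u C I) (hC : IsSubalg u C) : 0 ∈ I := by
  obtain ⟨x, hx⟩ := hI.2.1
  exact hI.2.2.1 x hx 0 hC.2.1 (hC.nonneg (hI.1 hx))

theorem IsIdealIn.nOplus_mem (hI : IsIdealIn u C I) (hC : IsSubalg u C) {z : α} (hz : z ∈ I) :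
    ∀ n, nOplus u n z ∈ I
  | 0 => hI.zero_mem hC
  | n + 1 => hI.2.2.2 _ (hI.nOplus_mem hC hz n) _ hz

theorem IsIdealIn.eq_dsetIn_of_isGreatest (hI : IsIdealIn u C I) {a : α} (ha : IsGreatest I a) :
    I = dsetIn C a :=
  Set.Subset.antisymm (fun _ hx => ⟨hI.1 hx, ha.2 hx⟩) fun x hx => hI.2.2.1 a ha.1 x hx.1 hx.2

theorem polarIn_subset : polarIn C X ⊆ C := fun _ hy => hy.1

theorem polarIn_anti (h : X ⊆ Y) : polarIn C Y ⊆ polarIn C X :=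
  fun _ hy => ⟨hy.1, fun x hx => hy.2 x (h hx)⟩

theorem subset_polarIn_polarIn (hX : X ⊆ C) : X ⊆ polarIn C (polarIn C X) :=
  fun x hx => ⟨hX hx, fun y hy => by rw [inf_comm]; exact hy.2 x hx⟩

theorem isPolarIdealIn_polarIn (hX : X ⊆ C) : IsPolarIdealIn C (polarIn C X) :=
  (polarIn_anti (subset_polarIn_polarIn hX)).antisymm (subset_polarIn_polarIn polarIn_subset)

theorem IsLargeSubalg.eq_zero_of_forall_le_nOplus (hN : IsLargeSubalg u N) {z : α}
    (hz : z ∈ Set.Icc 0 u) (h : ∀ n, ∀ w ∈ N, w ≤ nOplus u n z → w = 0) : z = 0 := by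
  by_contra hz0
  obtain ⟨n, w, hw, hw0, hwz⟩ := hN.2 z hz hz0
  exact hw0 (h n w hw hwz)

variable [AddLeftMono α]

theorem oplus_nonneg (hu : 0 ≤ u) {x y : α} (hx : 0 ≤ x) (hy : 0 ≤ y) : 0 ≤ oplus u x y :=
  le_inf (add_nonneg hx hy) hu

theorem nOplus_nonneg (hu : 0 ≤ u) {z : α} (hz : 0 ≤ z) : ∀ n, 0 ≤ nOplus u n z
  | 0 => le_rfl
  | n + 1 => oplus_nonneg hu (nOplus_nonneg hu hz n) hz

theorem IsIdealIn.oplus_self_of_isGreatest (hI : IsIdealIn u C I) (hC : IsSubalg u C) {a : α}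
    (ha : IsGreatest I a) : oplus u a a = a :=
  le_antisymm (ha.2 (hI.2.2.2 a ha.1 a ha.1))
    (le_inf (le_add_of_nonneg_right (hC.nonneg (hI.1 ha.1))) (hC.1 (hI.1 ha.1)).2)

variable [AddRightMono α]

theorem add_comm_of_inf_eq_zero {a b : α} (h : a ⊓ b = 0) : a + b = b + a := by
  have key : ∀ x y : α, x ⊓ y = 0 → y ⊔ x = x + y := by
    intro x y hxy
    calc y ⊔ x = (x + -x + y) ⊔ (x + -y + y) := by
          rw [add_neg_cancel, zero_add, add_assoc, neg_add_cancel, add_zero]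
      _ = x + -(x ⊓ y) + y := by rw [← sup_add, ← add_sup, neg_inf]
      _ = x + y := by rw [hxy, neg_zero, add_zero]
  rw [← key a b h, ← key b a (by rwa [inf_comm]), sup_comm]

theorem inf_add_le_add_inf {a b c : α} (ha : 0 ≤ a) (hb : 0 ≤ b) (hc : 0 ≤ c) :
    a ⊓ (b + c) ≤ a ⊓ b + a ⊓ c := by
  rw [add_inf, inf_add, inf_add]
  exact le_inf (le_inf (inf_le_left.trans (le_add_of_nonneg_right ha))
      (inf_le_left.trans (le_add_of_nonneg_left hb)))
    (le_inf (inf_le_left.trans (le_add_of_nonneg_right hc)) inf_le_right)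

theorem le_of_le_add_of_inf_eq_zero {a b c : α} (ha : 0 ≤ a) (hb : 0 ≤ b) (hc : 0 ≤ c)
    (habc : a ≤ b + c) (hac : a ⊓ c = 0) : a ≤ b :=
  calc a = a ⊓ (b + c) := (inf_eq_left.mpr habc).symm
    _ ≤ a ⊓ b + a ⊓ c := inf_add_le_add_inf ha hb hc
    _ = a ⊓ b := by rw [hac, add_zero]
    _ ≤ b := inf_le_right

theorem neg_inf_add_le {z i j : α} (h : z ≤ i + j) (hj : 0 ≤ j) : -(z ⊓ i) + z ≤ j := by
  rw [neg_inf, sup_add, neg_add_cancel]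
  exact sup_le hj (neg_add_le_iff_le_add.mpr h)

theorem oplus_mono {x x' y y' : α} (hx : x ≤ x') (hy : y ≤ y') : oplus u x y ≤ oplus u x' y' :=
  inf_le_inf_right _ (add_le_add hx hy)

theorem oplus_inf_left {x y : α} (hy : 0 ≤ y) : oplus u (x ⊓ u) y = oplus u x y := by
  rw [oplus, oplus, inf_add, inf_assoc, inf_eq_right.mpr (le_add_of_nonneg_right hy)]

theorem oplus_inf_right {x y : α} (hx : 0 ≤ x) : oplus u x (y ⊓ u) = oplus u x y := by
  rw [oplus, oplus, add_inf, inf_assoc, inf_eq_right.mpr (le_add_of_nonneg_left hx)]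

theorem oplus_assoc {x y z : α} (hx : 0 ≤ x) (hz : 0 ≤ z) :
    oplus u (oplus u x y) z = oplus u x (oplus u y z) := by
  calc oplus u (oplus u x y) z = oplus u (x + y) z := oplus_inf_left hz
    _ = oplus u x (y + z) := by rw [oplus, oplus, add_assoc]
    _ = oplus u x (oplus u y z) := (oplus_inf_right hx).symm

theorem oplus_oplus_oplus (hu : 0 ≤ u) {a b c d : α} (ha : 0 ≤ a) (hb : 0 ≤ b) (hc : 0 ≤ c)
    (hd : 0 ≤ d) : oplus u (oplus u a b) (oplus u c d) = (a + b + (c + d)) ⊓ u :=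
  (oplus_inf_left (oplus_nonneg hu hc hd)).trans (oplus_inf_right (add_nonneg ha hb))

theorem setOplus_assoc {A B E : Set α} (hA : A ⊆ Set.Ici 0) (hE : E ⊆ Set.Ici 0) :
    setOplus u (setOplus u A B) E = setOplus u A (setOplus u B E) := by
  ext w
  constructor
  · rintro ⟨_, ⟨a, ha, b, hb, rfl⟩, c, hc, rfl⟩
    exact ⟨a, ha, _, ⟨b, hb, c, hc, rfl⟩, (oplus_assoc (hA ha) (hE hc)).symm⟩
  · rintro ⟨a, ha, _, ⟨b, hb, c, hc, rfl⟩, rfl⟩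
    exact ⟨_, ⟨a, ha, b, hb, rfl⟩, c, hc, oplus_assoc (hA ha) (hE hc)⟩

theorem nOplus_mono {z z' : α} (h : z ≤ z') : ∀ n, nOplus u n z ≤ nOplus u n z'
  | 0 => le_rfl
  | n + 1 => oplus_mono (nOplus_mono h n) h

theorem inf_nOplus_eq_zero (hu : 0 ≤ u) {b z : α} (hb : 0 ≤ b) (hz : 0 ≤ z) (h : b ⊓ z = 0) :
    ∀ n, b ⊓ nOplus u n z = 0
  | 0 => inf_eq_right.mpr hb
  | n + 1 => by
      refine le_antisymm ?_ (le_inf hb (nOplus_nonneg hu hz _))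
      calc b ⊓ nOplus u (n + 1) z ≤ b ⊓ (nOplus u n z + z) := inf_le_inf_left _ oplus_le_add
        _ ≤ b ⊓ nOplus u n z + b ⊓ z := inf_add_le_add_inf hb (nOplus_nonneg hu hz n) hz
        _ = 0 := by rw [inf_nOplus_eq_zero hu hb hz h n, h, add_zero]

theorem inf_eq_zero_of_le_nOplus (hu : 0 ≤ u) {b z w : α} {n : ℕ} (hb : 0 ≤ b) (hz : 0 ≤ z)
    (hw : 0 ≤ w) (h : b ⊓ z = 0) (hwz : w ≤ nOplus u n z) : b ⊓ w = 0 :=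
  le_antisymm (le_of_le_of_eq (inf_le_inf_left _ hwz) (inf_nOplus_eq_zero hu hb hz h n))
    (le_inf hb hw)

theorem unit_sub_oplus_eq_inf {x y : α} (hx : 0 ≤ x) (hy : 0 ≤ y) :
    u - oplus u (-(oplus u (u - x) y) + u) (-x + u) = x ⊓ y := by
  set t := oplus u (u - x) y
  have ht : -u + t = (-x + y) ⊓ 0 := by
    rw [show t = (u - x + y) ⊓ u from rfl, add_inf, neg_add_cancel, sub_eq_add_neg, add_assoc,
      neg_add_cancel_left]
  have hxt : x + (-u + t) = y ⊓ x := by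
    rw [ht, add_inf, add_neg_cancel_left, add_zero]
  have hsub : u - oplus u (-t + u) (-x + u) = (x + (-u + t)) ⊔ 0 := by
    rw [oplus, sub_eq_add_neg, neg_inf, add_sup, add_neg_cancel]
    congr 1
    simp only [neg_add_rev, neg_neg]
    rw [← add_assoc, ← add_assoc, add_neg_cancel_left, add_assoc]
  rw [hsub, hxt, sup_eq_left.mpr (le_inf hy hx), inf_comm]

theorem neg_oplus_unit_sub_add_unit {p z : α} (hpz : p ≤ z) :
    -(oplus u (u - z) p) + u = -p + z := by
  have h0 : (0 : α) ≤ -p + z := le_neg_add_iff_add_le.mpr (by rwa [add_zero])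
  have e : -((u - z) + p) + u = -p + z := by
    rw [sub_eq_add_neg, neg_add_rev, neg_add_rev, neg_neg, add_assoc, add_assoc,
      neg_add_cancel, add_zero]
  rw [oplus, neg_inf, sup_add, e, neg_add_cancel, sup_eq_left.mpr h0]

theorem isSubalg_Icc (hu : 0 ≤ u) : IsSubalg u (Set.Icc 0 u) :=
  ⟨subset_rfl, ⟨le_rfl, hu⟩, ⟨hu, le_rfl⟩,
    fun _ hx _ hy => ⟨oplus_nonneg hu hx.1 hy.1, inf_le_right⟩,
    fun x hx => ⟨sub_nonneg.mpr hx.2, sub_le_self u hx.1⟩,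
    fun _ hx => ⟨le_neg_add_iff_add_le.mpr (by rw [add_zero]; exact hx.2),
      neg_add_le_iff_le_add.mpr (le_add_of_nonneg_left hx.1)⟩⟩

theorem IsSubalg.inf_mem (hC : IsSubalg u C) {x y : α} (hx : x ∈ C) (hy : y ∈ C) :
    x ⊓ y ∈ C := by
  rw [← unit_sub_oplus_eq_inf (hC.nonneg hx) (hC.nonneg hy)]
  obtain ⟨-, -, -, hoplus, hsub, hneg⟩ := hC
  exact hsub _ (hoplus _ (hneg _ (hoplus _ (hsub x hx) y hy)) _ (hneg x hx))

theorem IsSubalg.neg_add_mem (hC : IsSubalg u C) {p z : α} (hp : p ∈ C) (hz : z ∈ C)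
    (hpz : p ≤ z) : -p + z ∈ C := by
  rw [← neg_oplus_unit_sub_add_unit hpz]
  exact hC.2.2.2.2.2 _ (hC.2.2.2.1 _ (hC.2.2.2.2.1 z hz) p hp)

theorem IsIdealIn.inf_eq_zero_of_inter_eq (hI : IsIdealIn u C I) (hJ : IsIdealIn u C J)
    (hC : IsSubalg u C) (hIJ : I ∩ J = {0}) {i j : α} (hi : i ∈ I) (hj : j ∈ J) : i ⊓ j = 0 := by
  have hij : i ⊓ j ∈ C := hC.inf_mem (hI.1 hi) (hJ.1 hj)
  have : i ⊓ j ∈ I ∩ J := ⟨hI.2.2.1 i hi _ hij inf_le_left, hJ.2.2.1 j hj _ hij inf_le_right⟩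
  rwa [hIJ] at this

theorem setOplus_down_closed (hC : IsSubalg u C) (hI : IsIdealIn u C I) (hJ : IsIdealIn u C J)
    {d z : α} (hd : d ∈ setOplus u I J) (hz : z ∈ C) (hzd : z ≤ d) : z ∈ setOplus u I J := by
  obtain ⟨i, hi, j, hj, rfl⟩ := hd
  have hp : z ⊓ i ∈ C := hC.inf_mem hz (hI.1 hi)
  refine ⟨z ⊓ i, hI.2.2.1 i hi _ hp inf_le_right, -(z ⊓ i) + z,
    hJ.2.2.1 j hj _ (hC.neg_add_mem hp hz inf_le_left)
      (neg_inf_add_le (hzd.trans oplus_le_add) (hC.nonneg (hJ.1 hj))), ?_⟩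
  rw [oplus, add_neg_cancel_left, inf_eq_left.mpr (hC.1 hz).2]

theorem oplus_mem_setOplus (hC : IsSubalg u C) (hI : IsIdealIn u C I) (hJ : IsIdealIn u C J)
    (hIJ : I ∩ J = {0}) {d₁ d₂ : α} (h₁ : d₁ ∈ setOplus u I J) (h₂ : d₂ ∈ setOplus u I J) :
    oplus u d₁ d₂ ∈ setOplus u I J := by
  obtain ⟨i₁, hi₁, j₁, hj₁, rfl⟩ := h₁
  obtain ⟨i₂, hi₂, j₂, hj₂, rfl⟩ := h₂
  refine ⟨oplus u i₁ i₂, hI.2.2.2 _ hi₁ _ hi₂, oplus u j₁ j₂, hJ.2.2.2 _ hj₁ _ hj₂, ?_⟩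
  have hcomm : j₁ + i₂ = i₂ + j₁ := add_comm_of_inf_eq_zero <| by
    rw [inf_comm]; exact hI.inf_eq_zero_of_inter_eq hJ hC hIJ hi₂ hj₁
  have h0 : ∀ {x}, x ∈ C → 0 ≤ x := hC.nonneg
  rw [oplus_oplus_oplus hC.unit_nonneg (h0 (hI.1 hi₁)) (h0 (hI.1 hi₂)) (h0 (hJ.1 hj₁))
      (h0 (hJ.1 hj₂)),
    oplus_oplus_oplus hC.unit_nonneg (h0 (hI.1 hi₁)) (h0 (hJ.1 hj₁)) (h0 (hI.1 hi₂))
      (h0 (hJ.1 hj₂)),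
    add_assoc, add_assoc, ← add_assoc i₂, ← add_assoc j₁, hcomm]

theorem isNormalIdealIn_setOplus (hC : IsSubalg u C) (hI : IsNormalIdealIn u C I)
    (hJ : IsNormalIdealIn u C J) (hIJ : I ∩ J = {0}) : IsNormalIdealIn u C (setOplus u I J) := by
  have hu := hC.unit_nonneg
  have h0 : ∀ {X : Set α}, X ⊆ C → X ⊆ Set.Ici 0 := fun hX _ hx => hC.nonneg (hX hx)
  rw [isNormalIdealIn_iff] at hI hJ ⊢
  refine ⟨⟨?_, ⟨0, 0, hI.1.zero_mem hC, 0, hJ.1.zero_mem hC, oplus_zero_left hu⟩,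
    fun _ hd _ hz hzd => setOplus_down_closed hC hI.1 hJ.1 hd hz hzd,
    fun _ h₁ _ h₂ => oplus_mem_setOplus hC hI.1 hJ.1 hIJ h₁ h₂⟩, fun x hx => ?_⟩
  · rintro _ ⟨i, hi, j, hj, rfl⟩
    exact hC.2.2.2.1 i (hI.1.1 hi) j (hJ.1.1 hj)
  have hx0 : {x} ⊆ Set.Ici 0 := Set.singleton_subset_iff.mpr (hC.nonneg hx)
  rw [← setOplus_assoc hx0 (h0 hJ.1.1), hI.2 x hx, setOplus_assoc (h0 hI.1.1) (h0 hJ.1.1),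
    hJ.2 x hx, setOplus_assoc (h0 hI.1.1) hx0]

theorem IsSummandIdealIn.exists_isGreatest (h : IsSummandIdealIn u C I) (hC : IsSubalg u C) :
    ∃ a, IsGreatest I a ∧ a ⊓ (-a + u) = 0 := by
  obtain ⟨hI, J, hJ, hIJ, hgen⟩ := h
  have hdisj {i j : α} : i ∈ I → j ∈ J → i ⊓ j = 0 := hI.1.inf_eq_zero_of_inter_eq hJ.1 hC hIJ
  have hIJD : I ∪ J ⊆ setOplus u I J := by
    rintro w (hw | hw)
    · exact ⟨w, hw, 0, hJ.1.zero_mem hC, oplus_zero_right (hC.1 (hI.1.1 hw)).2⟩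
    · exact ⟨0, hI.1.zero_mem hC, w, hw, oplus_zero_left (hC.1 (hJ.1.1 hw)).2⟩
  have hu : u ∈ normalGenIn u C (I ∪ J) := by rw [hgen]; exact hC.2.2.1
  obtain ⟨i₀, hi₀, j₀, hj₀, hu_eq⟩ := hu _ ⟨isNormalIdealIn_setOplus hC hI hJ hIJ, hIJD⟩
  have hi₀0 := hC.nonneg (hI.1.1 hi₀)
  have hj₀0 := hC.nonneg (hJ.1.1 hj₀)
  have huij : u ≤ i₀ + j₀ := hu_eq ▸ oplus_le_add
  refine ⟨i₀, ⟨hi₀, fun x hx => le_of_le_add_of_inf_eq_zero (hC.nonneg (hI.1.1 hx)) hi₀0 hj₀0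
    ((hC.1 (hI.1.1 hx)).2.trans huij) (hdisj hx hj₀)⟩, ?_⟩
  refine le_antisymm ?_ (le_inf hi₀0 (le_neg_add_iff_add_le.mpr ?_))
  · calc i₀ ⊓ (-i₀ + u) ≤ i₀ ⊓ j₀ := inf_le_inf_left _ (neg_add_le_iff_le_add.mpr huij)
      _ = 0 := hdisj hi₀ hj₀
  · rw [add_zero]; exact (hC.1 (hI.1.1 hi₀)).2

theorem IsLargeSubalg.polarIn_polarIn_inter_subset (hN : IsLargeSubalg u N)
    (hI : IsPolarIdealIn (Set.Icc 0 u) I) : polarIn N (polarIn N (I ∩ N)) ⊆ I := by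
  have hu := hN.1.unit_nonneg
  intro x hx
  have hxM : x ∈ Set.Icc 0 u := hN.1.1 hx.1
  rw [← hI]
  refine ⟨hxM, fun y hy => hN.eq_zero_of_forall_le_nOplus
    ⟨le_inf hxM.1 hy.1.1, inf_le_left.trans hxM.2⟩ fun n w hw hwxy => ?_⟩
  have hw0 := hN.1.nonneg hw
  have hwP : w ∈ polarIn N (I ∩ N) := by
    refine ⟨hw, fun i hi => ?_⟩
    have hi0 := hN.1.nonneg hi.2
    have hixy : i ⊓ (x ⊓ y) = 0 :=
      le_antisymm ((le_inf (inf_le_right.trans inf_le_right) inf_le_left).trans (hy.2 i hi.1).le)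
        (le_inf hi0 (le_inf hxM.1 hy.1.1))
    rw [inf_comm]
    exact inf_eq_zero_of_le_nOplus hu hi0 (le_inf hxM.1 hy.1.1) hw0 hixy hwxy
  have hwx : w ⊓ x = 0 := by rw [inf_comm]; exact hx.2 w hwP
  simpa using
    inf_eq_zero_of_le_nOplus hu hw0 hxM.1 hw0 hwx (hwxy.trans (nOplus_mono inf_le_left n))

theorem IsLargeSubalg.le_of_forall_inter_le (hN : IsLargeSubalg u N)
    (hI : IsIdealIn u (Set.Icc 0 u) I) {a b : α} (ha : a ∈ I) (hb : b ∈ N)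
    (hbc : b ⊓ (-b + u) = 0) (hIb : ∀ w ∈ I ∩ N, w ≤ b) : a ≤ b := by
  have hu := hN.1.unit_nonneg
  have haM := hI.1 ha
  have hbM := hN.1.1 hb
  have hb' : 0 ≤ -b + u := le_neg_add_iff_add_le.mpr (by rw [add_zero]; exact hbM.2)
  refine le_of_le_add_of_inf_eq_zero haM.1 hbM.1 hb' (by rw [add_neg_cancel_left]; exact haM.2) ?_
  have hzM : a ⊓ (-b + u) ∈ Set.Icc 0 u := ⟨le_inf haM.1 hb', inf_le_left.trans haM.2⟩
  refine hN.eq_zero_of_forall_le_nOplus hzM fun n w hw hwz => ?_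
  have hwI : w ∈ I := hI.2.2.1 _ (hI.nOplus_mem (isSubalg_Icc hu)
    (hI.2.2.1 a ha _ hzM inf_le_left) n) w (hN.1.1 hw) hwz
  have hbw := inf_eq_zero_of_le_nOplus hu hbM.1 hb' (hN.1.nonneg hw) hbc
    (hwz.trans (nOplus_mono inf_le_right n))
  rwa [inf_eq_right.mpr (hIb w ⟨hwI, hw⟩)] at hbw

end LatticeOrderedGroup

theorem stmt16_general (u : G) (N : Set G)
    (hN : IsLargeSubalg u N)
    (hNsp : IsStronglyProjectableIn u N)
    (hMsp : IsStronglyProjectableIn u (Set.Icc (0 : G) u))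
    (I : Set G) (hI : IsPolarIdealIn (Set.Icc (0 : G) u) I) :
    ∃! a : G, a ∈ N ∩ I ∧ oplus u a a = a ∧ I = dsetIn (Set.Icc (0 : G) u) a := by
  have hM : IsSubalg u (Set.Icc 0 u) := isSubalg_Icc hN.1.unit_nonneg
  have hIM : IsIdealIn u (Set.Icc 0 u) I := (hMsp I hI).1.1
  obtain ⟨a, ha, -⟩ := (hMsp I hI).exists_isGreatest hM
  set K := polarIn N (polarIn N (I ∩ N))
  obtain ⟨b, hb, hbc⟩ := (hNsp K (isPolarIdealIn_polarIn polarIn_subset)).exists_isGreatest hN.1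
  have hba : b ≤ a := ha.2 (hN.polarIn_polarIn_inter_subset hI hb.1)
  have hab : a ≤ b := hN.le_of_forall_inter_le hIM ha.1 (polarIn_subset hb.1) hbc
    fun w hw => hb.2 (subset_polarIn_polarIn Set.inter_subset_right hw)
  obtain rfl := le_antisymm hab hba
  refine ⟨a, ⟨⟨polarIn_subset hb.1, ha.1⟩, hIM.oplus_self_of_isGreatest hM ha,
    hIM.eq_dsetIn_of_isGreatest ha⟩, ?_⟩
  rintro c ⟨⟨-, hc⟩, -, hIc⟩
  refine (ha.unique ⟨hc, fun x hx => ?_⟩).symm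
  rw [hIc] at hx
  exact hx.2

theorem stmt16 (u : G) (hu : IsStrongUnit u) (N : Set G)
    (hN : IsLargeSubalg u N)
    (hNsp : IsStronglyProjectableIn u N)
    (hMsp : IsStronglyProjectableIn u (Set.Icc (0 : G) u))
    (I : Set G) (hI : IsPolarIdealIn (Set.Icc (0 : G) u) I) :
    ∃! a : G, a ∈ N ∩ I ∧ oplus u a a = a ∧ I = dsetIn (Set.Icc (0 : G) u) a :=
  stmt16_general u N hN hNsp hMsp I hI
end

section
/- Let H be a lattice-ordered group (not assumed commutative), let G be an ℓ-subgroup of H (a subgroup that is also a sublattice), and let u ∈ G be a strong unit of H. If Γ(G,u) is a large pseudo MV-subalgebra of Γ(H,u) — that is, for every nonzero y in the interval [0,u] of H there exist n ∈ ℕ and a nonzero x in the interval [0,u] of G with x ≤ n.y, where n.y denotes y ⊕ ⋯ ⊕ y (n summands) computed with y ⊕ z := (y + z) ∧ u in H — then G is a large ℓ-subgroup of H: for every h ∈ H with 0 < h there exist n ∈ ℕ and x ∈ G with 0 < x and x ≤ n·h. -/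
variable {G : Type*} [Lattice G] [AddGroup G]
  [CovariantClass G G (· + ·) (· ≤ ·)]
  [CovariantClass G G (Function.swap (· + ·)) (· ≤ ·)]

/-!
For `0 < h` the element `h ⊓ u` of `Γ(H,u)` is nonzero: if `h ⊓ u = 0` then `h ⊓ m • u = 0` for
all `m`, and choosing `h ≤ m • u` gives `h = 0`. Largeness of `Γ(G,u)` then yields
`0 < x ≤ n.(h ⊓ u) ≤ n • (h ⊓ u) ≤ n • h` with `x ∈ G`.
-/

section LatticeOrderedGroup

variable {α : Type*} [Lattice α] [AddGroup α] [AddRightMono α]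

theorem nOplus_le_nsmul (u y : α) : ∀ n : ℕ, nOplus u n y ≤ n • y
  | 0 => by rw [nOplus, zero_nsmul]
  | n + 1 => calc
      nOplus u (n + 1) y = (nOplus u n y + y) ⊓ u := rfl
      _ ≤ nOplus u n y + y := inf_le_left
      _ ≤ n • y + y := add_le_add_left (nOplus_le_nsmul u y n) y
      _ = (n + 1) • y := (succ_nsmul y n).symm

variable [AddLeftMono α]

theorem inf_nsmul_eq_zero_of_inf_eq_zero {a b : α} (ha : 0 ≤ a) (hb : 0 ≤ b)
    (hab : a ⊓ b = 0) : ∀ n : ℕ, a ⊓ n • b = 0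
  | 0 => by rw [zero_nsmul, inf_eq_right.2 ha]
  | n + 1 => by
    have hle : a ⊓ (n + 1) • b ≤ b := calc
      a ⊓ (n + 1) • b ≤ (a + b) ⊓ (n • b + b) :=
        inf_le_inf (le_add_of_nonneg_right hb) (succ_nsmul b n).le
      _ = a ⊓ n • b + b := (inf_add _ _ _).symm
      _ = b := by rw [inf_nsmul_eq_zero_of_inf_eq_zero ha hb hab n, zero_add]
    exact le_antisymm (hab ▸ le_inf inf_le_left hle) (le_inf ha (nsmul_nonneg hb _))

theorem IsStrongUnit.inf_ne_zero {u h : α} (hu : IsStrongUnit u) (hh : 0 < h) : h ⊓ u ≠ 0 := by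
  intro hhu
  obtain ⟨m, hm⟩ := hu.2 h
  apply hh.ne'
  rw [← inf_eq_left.2 hm]
  exact inf_nsmul_eq_zero_of_inf_eq_zero hh.le hu.1 hhu m

end LatticeOrderedGroup

theorem stmt19_general {H : Type*} [Lattice H] [AddGroup H]
    [CovariantClass H H (· + ·) (· ≤ ·)]
    [CovariantClass H H (Function.swap (· + ·)) (· ≤ ·)]
    (G' : AddSubgroup H)
    (u : H) (hu : IsStrongUnit u)
    (hlarge : ∀ y ∈ Set.Icc (0 : H) u, y ≠ 0 →
      ∃ n : ℕ, ∃ x ∈ (G' : Set H) ∩ Set.Icc (0 : H) u, x ≠ 0 ∧ x ≤ nOplus u n y) :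
    ∀ h : H, 0 < h → ∃ n : ℕ, ∃ x ∈ G', 0 < x ∧ x ≤ n • h := by
  intro h hh
  obtain ⟨n, x, ⟨hxG, hx0, -⟩, hx, hxle⟩ :=
    hlarge (h ⊓ u) ⟨le_inf hh.le hu.1, inf_le_right⟩ (hu.inf_ne_zero hh)
  refine ⟨n, x, hxG, hx0.lt_of_ne' hx, ?_⟩
  calc x ≤ nOplus u n (h ⊓ u) := hxle
    _ ≤ n • (h ⊓ u) := nOplus_le_nsmul u _ n
    _ ≤ n • h := nsmul_le_nsmul_right inf_le_left n

theorem stmt19 {H : Type*} [Lattice H] [AddGroup H]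
    [CovariantClass H H (· + ·) (· ≤ ·)]
    [CovariantClass H H (Function.swap (· + ·)) (· ≤ ·)]
    (G' : AddSubgroup H)
    (hlat : ∀ x ∈ G', ∀ y ∈ G', x ⊓ y ∈ G' ∧ x ⊔ y ∈ G')
    (u : H) (huG : u ∈ G') (hu : IsStrongUnit u)
    (hlarge : ∀ y ∈ Set.Icc (0 : H) u, y ≠ 0 →
      ∃ n : ℕ, ∃ x ∈ (G' : Set H) ∩ Set.Icc (0 : H) u, x ≠ 0 ∧ x ≤ nOplus u n y) :
    ∀ h : H, 0 < h → ∃ n : ℕ, ∃ x ∈ G', 0 < x ∧ x ≤ n • h :=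
  stmt19_general G' u hu hlarge
end
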